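/- For all K > 1 and r ∈ (0,1), one has r^(1/K) < √(1 - tanh(artanh((1-r²)^(1/8))/K)⁸). (That is, u₁⁻¹(u₁(r)/K) > r^(1/K) where u₁(r) = artanh((1-r²)^(1/8)) and u₁⁻¹(y) = √(1-tanh(y)⁸).) -/
import Mathlib

/-- Inverse hyperbolic tangent. -/
noncomputable def artanh (x : ℝ) : ℝ := Real.log ((1 + x) / (1 - x)) / 2

lemma tanh_formula (x : ℝ) :
    Real.tanh x = (Real.exp (2*x) - 1) / (Real.exp (2*x) + 1) := by
  have h : Real.exp (2*x) = Real.exp x * Real.exp x := by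
    rw [two_mul, Real.exp_add]
  rw [Real.tanh_eq_sinh_div_cosh, Real.sinh_eq, Real.cosh_eq, Real.exp_neg, h]
  have h1 : Real.exp x > 0 := Real.exp_pos x
  have h2 : Real.exp x * Real.exp x + 1 > 0 := by positivity
  field_simp

lemma tanh_mono {a b : ℝ} (h : a ≤ b) : Real.tanh a ≤ Real.tanh b := by
  rw [tanh_formula, tanh_formula]
  have ha : (0:ℝ) < Real.exp (2*a) + 1 := by positivity
  have hb : (0:ℝ) < Real.exp (2*b) + 1 := by positivity
  have hab : Real.exp (2*a) ≤ Real.exp (2*b) := by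
    apply Real.exp_le_exp.2; linarith
  rw [div_le_div_iff₀ ha hb]
  nlinarith

lemma tanh_artanh {x : ℝ} (h0 : -1 < x) (h1 : x < 1) :
    Real.tanh (artanh x) = x := by
  have hp : (0:ℝ) < (1 + x) / (1 - x) := by
    apply div_pos <;> linarith
  have he : Real.exp (2 * artanh x) = (1 + x) / (1 - x) := by
    rw [artanh]
    rw [show 2 * (Real.log ((1 + x) / (1 - x)) / 2) = Real.log ((1+x)/(1-x)) by ring]
    exact Real.exp_log hp
  rw [tanh_formula, he]
  have h1' : (0:ℝ) < 1 - x := by linarith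
  field_simp
  ring

lemma tanh_strict {a b : ℝ} (h : a < b) : Real.tanh a < Real.tanh b := by
  rw [tanh_formula, tanh_formula]
  have ha : (0:ℝ) < Real.exp (2*a) + 1 := by positivity
  have hb : (0:ℝ) < Real.exp (2*b) + 1 := by positivity
  have hab : Real.exp (2*a) < Real.exp (2*b) := by
    apply Real.exp_lt_exp.2; linarith
  rw [div_lt_div_iff₀ ha hb]
  nlinarith

lemma artanh_mono {a b : ℝ} (h0 : 0 ≤ a) (hab : a ≤ b) (h1 : b < 1) :
    artanh a ≤ artanh b := by
  unfold artanh
  have h1b : (0:ℝ) < 1 - b := by linarith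
  have h1a : (0:ℝ) < 1 - a := by linarith
  have hpa : (0:ℝ) < (1 + a) / (1 - a) := by apply div_pos <;> linarith
  have key : (1 + a) / (1 - a) ≤ (1 + b) / (1 - b) := by
    rw [div_le_div_iff₀ h1a h1b]; nlinarith
  have := Real.log_le_log hpa key
  linarith

lemma artanh_pos {x : ℝ} (h0 : 0 < x) (h1 : x < 1) : 0 < artanh x := by
  unfold artanh
  have : (1:ℝ) < (1 + x) / (1 - x) := by
    rw [lt_div_iff₀ (by linarith)]; linarith
  have := Real.log_pos this
  linarith

lemma artanh_eq {y : ℝ} (h0 : 0 ≤ y) (h1 : y < 1) :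
    artanh y = Real.log ((1+y)^2*(1+y^2)*(1+y^4)) / 2 - Real.log (1 - y^8) / 2 := by
  have h8 : y ^ 8 < 1 := pow_lt_one₀ h0 h1 (by norm_num)
  have h8' : (0:ℝ) < 1 - y^8 := by linarith
  have hy : (0:ℝ) < 1 - y := by linarith
  unfold artanh
  have key : (1+y)/(1-y) = (1+y)^2*(1+y^2)*(1+y^4)/(1-y^8) := by
    field_simp
    ring
  rw [key, Real.log_div (by positivity) (ne_of_gt h8')]
  ring

/-- `log (1 + p*x) ≤ p * log (1 + x)` for `p ≥ 1`, `x ≥ 0`. -/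
lemma log_one_add_mul_le {x p : ℝ} (hx : 0 ≤ x) (hp : 1 ≤ p) :
    Real.log (1 + p * x) ≤ p * Real.log (1 + x) := by
  have h := one_add_mul_self_le_rpow_one_add (show (-1:ℝ) ≤ x by linarith) hp
  have h1 : (0:ℝ) < 1 + p * x := by nlinarith
  calc Real.log (1 + p * x) ≤ Real.log ((1 + x) ^ p) := Real.log_le_log h1 h
  _ = p * Real.log (1 + x) := Real.log_rpow (by linarith) p

lemma Q_lt_K_Q {K a b : ℝ} (hK : 1 < K) (ha : 0 < a) (hb0 : 0 ≤ b)
    (hba : b ≤ K ^ ((1:ℝ)/8) * a) :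
    Real.log ((1+b)^2*(1+b^2)*(1+b^4)) < K * Real.log ((1+a)^2*(1+a^2)*(1+a^4)) := by
  set ν : ℝ := K ^ ((1:ℝ)/8) with hν_def
  have hK0 : (0:ℝ) < K := by linarith
  have hν1 : 1 < ν := by
    exact (Real.one_lt_rpow_iff_of_pos (by linarith)).2 (Or.inl ⟨hK, by norm_num⟩)
  have hνK : ν < K := by
    rw [hν_def]
    nth_rewrite 2 [show K = K ^ (1:ℝ) by rw [Real.rpow_one]]
    exact Real.rpow_lt_rpow_of_exponent_lt hK (by norm_num)
  have hν2K : ν ^ (2:ℕ) ≤ K := by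
    rw [hν_def, ← Real.rpow_natCast (K ^ ((1:ℝ)/8)) 2, ← Real.rpow_mul hK0.le]
    nth_rewrite 2 [show K = K ^ (1:ℝ) by rw [Real.rpow_one]]
    apply Real.rpow_le_rpow_of_exponent_le hK.le
    norm_num
  have hν4K : ν ^ (4:ℕ) ≤ K := by
    rw [hν_def, ← Real.rpow_natCast (K ^ ((1:ℝ)/8)) 4, ← Real.rpow_mul hK0.le]
    nth_rewrite 2 [show K = K ^ (1:ℝ) by rw [Real.rpow_one]]
    apply Real.rpow_le_rpow_of_exponent_le hK.le
    norm_num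
  have hb1p : (0:ℝ) < 1 + b := by linarith
  have hA1 : Real.log (1+b) ≤ Real.log (1+ν*a) := Real.log_le_log hb1p (by linarith)
  have hA2 : Real.log (1+ν*a) ≤ ν * Real.log (1+a) := log_one_add_mul_le ha.le hν1.le
  have hA3 : ν * Real.log (1+a) < K * Real.log (1+a) := by
    apply mul_lt_mul_of_pos_right hνK (Real.log_pos (by linarith))
  have hb2 : b^2 ≤ ν^2 * a^2 := by nlinarith
  have hb4 : b^4 ≤ ν^4 * a^4 := by nlinarith
  have hB1 : Real.log (1+b^2) ≤ Real.log (1+ν^2*(a^2)) :=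
    Real.log_le_log (by positivity) (by nlinarith)
  have hB2 : Real.log (1+ν^2*(a^2)) ≤ ν^2 * Real.log (1+a^2) :=
    log_one_add_mul_le (by positivity) (one_le_pow₀ hν1.le)
  have hB3 : ν^2 * Real.log (1+a^2) ≤ K * Real.log (1+a^2) := by
    apply mul_le_mul_of_nonneg_right hν2K (Real.log_nonneg (by nlinarith))
  have hC1 : Real.log (1+b^4) ≤ Real.log (1+ν^4*(a^4)) :=
    Real.log_le_log (by positivity) (by nlinarith)
  have hC2 : Real.log (1+ν^4*(a^4)) ≤ ν^4 * Real.log (1+a^4) :=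
    log_one_add_mul_le (by positivity) (one_le_pow₀ hν1.le)
  have hC3 : ν^4 * Real.log (1+a^4) ≤ K * Real.log (1+a^4) := by
    apply mul_le_mul_of_nonneg_right hν4K (Real.log_nonneg (by nlinarith))
  have expb : Real.log ((1+b)^2*(1+b^2)*(1+b^4))
      = 2 * Real.log (1+b) + Real.log (1+b^2) + Real.log (1+b^4) := by
    rw [Real.log_mul (by positivity) (by positivity),
      Real.log_mul (by positivity) (by positivity), Real.log_pow]
    push_cast; ring
  have expa : Real.log ((1+a)^2*(1+a^2)*(1+a^4))
      = 2 * Real.log (1+a) + Real.log (1+a^2) + Real.log (1+a^4) := by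
    rw [Real.log_mul (by positivity) (by positivity),
      Real.log_mul (by positivity) (by positivity), Real.log_pow]
    push_cast; ring
  rw [expb, expa]
  linarith

theorem rpow_lt_u1_inv_u1_div_K (K : ℝ) (hK : 1 < K) (r : ℝ)
    (hr : r ∈ Set.Ioo (0:ℝ) 1) :
    r ^ (1 / K) <
      Real.sqrt (1 - Real.tanh (artanh ((1 - r ^ 2) ^ ((1:ℝ)/8)) / K) ^ 8) := by
  obtain ⟨hr0, hr1⟩ := hr
  have hK0 : (0:ℝ) < K := by linarith
  have hr2pos : (0:ℝ) < r ^ 2 := by positivity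
  have hr2lt : r ^ 2 < 1 := by nlinarith
  have hx0 : (0:ℝ) < 1 - r ^ 2 := by linarith
  -- b
  set b : ℝ := (1 - r ^ 2) ^ ((1:ℝ)/8) with hb_def
  have hb0 : 0 < b := Real.rpow_pos_of_pos hx0 _
  have hb1 : b < 1 := Real.rpow_lt_one hx0.le (by linarith) (by norm_num)
  have hb8 : b ^ (8:ℕ) = 1 - r ^ 2 := by
    rw [hb_def, ← Real.rpow_natCast ((1 - r ^ 2) ^ ((1:ℝ)/8)) 8, ← Real.rpow_mul hx0.le]
    norm_num
  -- a
  have hrK1 : r ^ ((2:ℝ)/K) < 1 := Real.rpow_lt_one hr0.le hr1 (by positivity)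
  have hrKpos : 0 < r ^ ((2:ℝ)/K) := Real.rpow_pos_of_pos hr0 _
  have hy0 : (0:ℝ) < 1 - r ^ ((2:ℝ)/K) := by linarith
  set a : ℝ := (1 - r ^ ((2:ℝ)/K)) ^ ((1:ℝ)/8) with ha_def
  have ha0 : 0 < a := Real.rpow_pos_of_pos hy0 _
  have ha1 : a < 1 := Real.rpow_lt_one hy0.le (by linarith) (by norm_num)
  have ha8 : a ^ (8:ℕ) = 1 - r ^ ((2:ℝ)/K) := by
    rw [ha_def, ← Real.rpow_natCast ((1 - r ^ ((2:ℝ)/K)) ^ ((1:ℝ)/8)) 8,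
      ← Real.rpow_mul hy0.le]
    norm_num
  -- Bernoulli: 1 - r^2 ≤ K * (1 - r^(2/K))
  have hbern : 1 - r ^ 2 ≤ K * (1 - r ^ ((2:ℝ)/K)) := by
    have h1 : r ^ ((2:ℝ)/K) = (1 + (r^2 - 1)) ^ ((1:ℝ)/K) := by
      rw [show (1:ℝ) + (r^2 - 1) = r ^ (2:ℕ) by ring, ← Real.rpow_natCast r 2,
        ← Real.rpow_mul hr0.le]
      norm_num
      rw [div_eq_mul_inv]
    have h2 := rpow_one_add_le_one_add_mul_self (s := r^2 - 1) (by nlinarith)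
      (p := (1:ℝ)/K) (by positivity) (by rw [div_le_one hK0]; linarith)
    rw [← h1] at h2
    have h3 : K * (r ^ ((2:ℝ)/K)) ≤ K * (1 + 1/K * (r^2-1)) := by
      apply mul_le_mul_of_nonneg_left h2 hK0.le
    have h4 : K * (1 + 1/K * (r^2-1)) = K + (r^2 - 1) := by field_simp
    nlinarith
  -- b ≤ K^(1/8) * a
  have hKnu : (K ^ ((1:ℝ)/8)) ^ (8:ℕ) = K := by
    rw [← Real.rpow_natCast (K ^ ((1:ℝ)/8)) 8, ← Real.rpow_mul hK0.le]
    norm_num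
  have hnupos : 0 < K ^ ((1:ℝ)/8) := Real.rpow_pos_of_pos hK0 _
  have hba : b ≤ K ^ ((1:ℝ)/8) * a := by
    have h8 : b ^ (8:ℕ) ≤ (K ^ ((1:ℝ)/8) * a) ^ (8:ℕ) := by
      rw [mul_pow, hKnu, hb8, ha8]
      exact hbern
    exact le_of_pow_le_pow_left₀ (by norm_num) (by positivity) h8
  -- artanh comparison
  have hQ := Q_lt_K_Q hK ha0 hb0.le hba
  have heqb : artanh b = Real.log ((1+b)^2*(1+b^2)*(1+b^4)) / 2 - Real.log r := by
    rw [artanh_eq hb0.le hb1, show (1:ℝ) - b^8 = r^2 by rw [hb8]; ring,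
      show (r:ℝ)^2 = r^(2:ℕ) by norm_num, Real.log_pow]
    push_cast; ring
  have heqa : artanh a = Real.log ((1+a)^2*(1+a^2)*(1+a^4)) / 2 - (1/K) * Real.log r := by
    rw [artanh_eq ha0.le ha1, show (1:ℝ) - a^8 = r^((2:ℝ)/K) by rw [ha8]; ring,
      Real.log_rpow hr0]
    ring
  have hmain : artanh b < K * artanh a := by
    rw [heqb, heqa]
    have hKlog : K * ((1/K) * Real.log r) = Real.log r := by field_simp
    nlinarith [hQ]
  -- conclude
  have hbpos : 0 < artanh b := artanh_pos hb0 hb1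
  have hapos : 0 < artanh a := artanh_pos ha0 ha1
  have hdiv : artanh b / K < artanh a := by
    rw [div_lt_iff₀ hK0]; linarith
  have htanh : Real.tanh (artanh b / K) < a := by
    have := tanh_strict hdiv
    rwa [tanh_artanh (by linarith) ha1] at this
  have htanh0 : 0 ≤ Real.tanh (artanh b / K) := by
    have h0 : Real.tanh 0 = 0 := by rw [tanh_formula]; norm_num
    have := tanh_mono (show (0:ℝ) ≤ artanh b / K by positivity)
    rwa [h0] at this
  have hpow : Real.tanh (artanh b / K) ^ (8:ℕ) < a ^ (8:ℕ) :=
    pow_lt_pow_left₀ htanh htanh0 (by norm_num)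
  rw [ha8] at hpow
  have hr2K : r ^ ((2:ℝ)/K) = (r ^ (1/K)) ^ (2:ℕ) := by
    rw [← Real.rpow_natCast (r ^ (1/K)) 2, ← Real.rpow_mul hr0.le]
    congr 1
    ring
  rw [Real.lt_sqrt (by positivity)]
  rw [hr2K] at hpow
  have : Real.tanh (artanh b / K) ^ (8:ℕ) < 1 - (r ^ (1/K)) ^ (2:ℕ) := by linarith
  push_cast at this ⊢
  linarith
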